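/- If X is a closed subspace of a compact Hausdorff space Y, and Y has the Complex Stone–Weierstrass Property, then X has the Complex Stone–Weierstrass Property. -/
import Mathlib

/-- A compact Hausdorff space `X` has the Complex Stone–Weierstrass Property iff every
subalgebra of `C(X, ℂ)` that separates points (subalgebras automatically contain the
constants) is dense in `C(X, ℂ)`. -/
def CSWP (X : Type*) [TopologicalSpace X] : Prop :=
  ∀ A : Subalgebra ℂ C(X, ℂ), A.SeparatesPoints → Dense (A : Set C(X, ℂ))

/-- If `X` is a closed subspace of a compact Hausdorff space `Y`, and `Y` has the CSWP,
then `X` has the CSWP. -/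
theorem stmt0 {Y : Type*} [TopologicalSpace Y] [CompactSpace Y] [T2Space Y]
    (X : Set Y) (hX : IsClosed X) (hY : CSWP Y) : CSWP X := by
  intro A hA
  haveI : CompactSpace X := isCompact_iff_compactSpace.mp hX.isCompact
  -- restriction algebra hom
  set ι : C(X, Y) := ⟨Subtype.val, continuous_subtype_val⟩ with hι
  set φ : C(Y, ℂ) →ₐ[ℂ] C(X, ℂ) := ContinuousMap.compRightAlgHom ℂ ℂ ι with hφ
  have hφcont : Continuous φ := ContinuousMap.compRightAlgHom_continuous ℂ ℂ ι
  set B : Subalgebra ℂ C(Y, ℂ) := (A.topologicalClosure).comap φ with hB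
  -- B separates points of Y
  have hBsep : B.SeparatesPoints := by
    intro y₁ y₂ hne
    by_cases h₁ : y₁ ∈ X
    · by_cases h₂ : y₂ ∈ X
      · obtain ⟨_, ⟨f, hfA, rfl⟩, hfne⟩ :=
          hA (x := (⟨y₁, h₁⟩ : X)) (y := (⟨y₂, h₂⟩ : X)) (by simpa using hne)
        obtain ⟨g, hg⟩ := f.exists_restrict_eq hX
        refine ⟨g, ⟨g, ?_, rfl⟩, ?_⟩
        · have : φ g = f := by
            ext x; exact DFunLike.congr_fun hg x
          rw [SetLike.mem_coe, Subalgebra.mem_comap, this]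
          exact A.le_topologicalClosure hfA
        · have e1 : g y₁ = f ⟨y₁, h₁⟩ := DFunLike.congr_fun hg ⟨y₁, h₁⟩
          have e2 : g y₂ = f ⟨y₂, h₂⟩ := DFunLike.congr_fun hg ⟨y₂, h₂⟩
          rw [e1, e2]; exact hfne
      · -- y₂ ∉ X : function vanishing on X ∪ {y₁}, equal 1 at y₂
        obtain ⟨u, hu0, hu1, -⟩ := exists_continuous_zero_one_of_isClosed
          (hX.union isClosed_singleton) (isClosed_singleton (x := y₂))
          (by
            rw [Set.disjoint_singleton_right]
            rintro (h | h)
            · exact h₂ h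
            · exact hne (Set.mem_singleton_iff.mp h).symm)
        set g : C(Y, ℂ) := ⟨fun y => (u y : ℂ), by continuity⟩ with hg
        refine ⟨g, ⟨g, ?_, rfl⟩, ?_⟩
        · rw [SetLike.mem_coe, Subalgebra.mem_comap]
          have : φ g = 0 := by
            ext x
            simp [hg, hφ, hι, hu0 (Set.mem_union_left _ x.2)]
          rw [this]; exact zero_mem _
        · have e1 : g y₁ = 0 := by
            simp [hg, hu0 (Set.mem_union_right _ rfl)]
          have e2 : g y₂ = 1 := by
            simp [hg, hu1 rfl]
          rw [e1, e2]; exact zero_ne_one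
    · -- y₁ ∉ X
      obtain ⟨u, hu0, hu1, -⟩ := exists_continuous_zero_one_of_isClosed
        (hX.union isClosed_singleton) (isClosed_singleton (x := y₁))
        (by
          rw [Set.disjoint_singleton_right]
          rintro (h | h)
          · exact h₁ h
          · exact hne (Set.mem_singleton_iff.mp h))
      set g : C(Y, ℂ) := ⟨fun y => (u y : ℂ), by continuity⟩ with hg
      refine ⟨g, ⟨g, ?_, rfl⟩, ?_⟩
      · rw [SetLike.mem_coe, Subalgebra.mem_comap]
        have : φ g = 0 := by
          ext x
          simp [hg, hφ, hι, hu0 (Set.mem_union_left _ x.2)]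
        rw [this]; exact zero_mem _
      · have e1 : g y₁ = 1 := by simp [hg, hu1 rfl]
        have e2 : g y₂ = 0 := by
          simp [hg, hu0 (Set.mem_union_right _ rfl)]
        rw [e1, e2]; exact one_ne_zero
  have hBdense := hY B hBsep
  -- B is closed, hence B = everything
  have hBclosed : IsClosed (B : Set C(Y, ℂ)) := by
    have : (B : Set C(Y, ℂ)) = φ ⁻¹' (A.topologicalClosure : Set C(X, ℂ)) := rfl
    rw [this]
    exact (A.isClosed_topologicalClosure).preimage hφcont
  have hBall : (B : Set C(Y, ℂ)) = Set.univ := hBclosed.closure_eq ▸ hBdense.closure_eq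
  -- conclude : closure of A is everything
  rw [dense_iff_closure_eq, ← Subalgebra.topologicalClosure_coe]
  ext f
  simp only [Set.mem_univ, iff_true, SetLike.mem_coe]
  obtain ⟨g, hg⟩ := f.exists_restrict_eq hX
  have hgB : g ∈ B := by rw [← SetLike.mem_coe, hBall]; trivial
  have h2 : φ g = f := by ext x; exact DFunLike.congr_fun hg x
  rw [hB, Subalgebra.mem_comap] at hgB
  rw [← h2]
  exact hgB
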